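/- Let k be a field, R = k[x,y], R^{S₂} ⊆ R the subalgebra of symmetric polynomials, B = R ⊗_{R^{S₂}} R, and br : B → R the multiplication map f⊗g ↦ fg. Set v := y⊗1 − 1⊗y ∈ B. Then: (i) the kernel of br equals R·v and is free of rank one as a left R-module with basis {v}; (ii) x·v = v·y in B, i.e. left multiplication by x and right multiplication by y agree on v. -/

import Mathlib

/-!
The Demazure operator `∂ p = (p - s p) / (x - y)` is linear over the symmetric polynomials, and
every `c` is the symmetric polynomial `c + ∂c * y` minus the symmetric multiple `∂c * y` of `y`.
Moving symmetric factors across the tensor sign gives `a ⊗ c = a c ⊗ 1 + (a ∂c ⊗ 1) * v`,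
hence `b = br b ⊗ 1 + (φ b ⊗ 1) * v` for the map `φ (a ⊗ c) = a ∂c`; and
`φ ((f ⊗ 1) * v) = -f ∂y = f`, so `f ↦ (f ⊗ 1) * v` is injective.
-/

open MvPolynomial TensorProduct

/-- `R = k[x,y]` (`x = X 0`, `y = X 1`). -/
noncomputable abbrev stmt11R (k : Type) [Field k] := MvPolynomial (Fin 2) k

/-- `R^{S₂}`, the subalgebra of symmetric polynomials. -/
noncomputable abbrev stmt11S (k : Type) [Field k] : Subalgebra k (stmt11R k) :=
  MvPolynomial.symmetricSubalgebra (Fin 2) k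

/-- The Soergel bimodule `B = R ⊗_{R^{S₂}} R`. -/
noncomputable abbrev stmt11B (k : Type) [Field k] :=
  (stmt11R k) ⊗[↥(stmt11S k)] (stmt11R k)

namespace MvPolynomial

variable {A : Type*} [CommRing A]

theorem isSymmetric_iff_rename_swap {p : MvPolynomial (Fin 2) A} :
    p.IsSymmetric ↔ rename (Equiv.swap 0 1) p = p := by
  refine ⟨fun h => h _, fun h σ => ?_⟩
  have hσ : ∀ τ : Equiv.Perm (Fin 2), τ = 1 ∨ τ = Equiv.swap 0 1 := by decide
  obtain rfl | rfl := hσ σ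
  · simp
  · exact h

theorem X_zero_sub_X_one_dvd_sub_rename_swap (p : MvPolynomial (Fin 2) A) :
    X 0 - X 1 ∣ p - rename (Equiv.swap 0 1) p := by
  set I := Ideal.span {(X 0 - X 1 : MvPolynomial (Fin 2) A)}
  have hswap : (Ideal.Quotient.mkₐ A I).comp (rename (Equiv.swap 0 1)) =
      Ideal.Quotient.mkₐ A I := by
    have h : Ideal.Quotient.mk I (X 0) = Ideal.Quotient.mk I (X 1) :=
      Ideal.Quotient.eq.mpr (Ideal.mem_span_singleton_self _)
    ext i
    fin_cases i <;> simp [h]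
  rw [← Ideal.mem_span_singleton, ← Ideal.Quotient.eq]
  exact (congrArg (· p) hswap).symm

theorem rename_swap_rename_swap (p : MvPolynomial (Fin 2) A) :
    rename (Equiv.swap 0 1) (rename (Equiv.swap 0 1) p) = p := by
  rw [rename_rename, ← Equiv.coe_trans, Equiv.swap_swap, Equiv.coe_refl, rename_id_apply]

/-- The Demazure operator `∂ p = (p - s p) / (x - y)`, where `s` swaps the two variables. -/
noncomputable def demazure (p : MvPolynomial (Fin 2) A) : MvPolynomial (Fin 2) A :=
  (X_zero_sub_X_one_dvd_sub_rename_swap p).choose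

theorem X_zero_sub_X_one_mul_demazure (p : MvPolynomial (Fin 2) A) :
    (X 0 - X 1) * demazure p = p - rename (Equiv.swap 0 1) p :=
  (X_zero_sub_X_one_dvd_sub_rename_swap p).choose_spec.symm

theorem X_zero_sub_X_one_ne_zero [Nontrivial A] : (X 0 - X 1 : MvPolynomial (Fin 2) A) ≠ 0 :=
  sub_ne_zero.mpr fun h => zero_ne_one (X_injective h)

variable [IsDomain A]

theorem demazure_eq_of_mul_eq {p q : MvPolynomial (Fin 2) A}
    (h : (X 0 - X 1) * q = p - rename (Equiv.swap 0 1) p) : demazure p = q :=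
  mul_left_cancel₀ X_zero_sub_X_one_ne_zero (by rw [X_zero_sub_X_one_mul_demazure, h])

theorem demazure_of_isSymmetric {p : MvPolynomial (Fin 2) A} (hp : p.IsSymmetric) :
    demazure p = 0 :=
  demazure_eq_of_mul_eq (by rw [hp, sub_self, mul_zero])

theorem demazure_X_one : demazure (X 1 : MvPolynomial (Fin 2) A) = -1 :=
  demazure_eq_of_mul_eq (by simp)

theorem demazure_add (p q : MvPolynomial (Fin 2) A) :
    demazure (p + q) = demazure p + demazure q :=
  demazure_eq_of_mul_eq (by
    rw [mul_add, X_zero_sub_X_one_mul_demazure, X_zero_sub_X_one_mul_demazure, map_add]; ring)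

theorem demazure_mul_of_isSymmetric {s : MvPolynomial (Fin 2) A} (hs : s.IsSymmetric)
    (p : MvPolynomial (Fin 2) A) : demazure (s * p) = s * demazure p :=
  demazure_eq_of_mul_eq (by
    rw [map_mul, hs, mul_left_comm, X_zero_sub_X_one_mul_demazure]; ring)

theorem isSymmetric_demazure (p : MvPolynomial (Fin 2) A) : (demazure p).IsSymmetric := by
  refine isSymmetric_iff_rename_swap.mpr (mul_left_cancel₀ X_zero_sub_X_one_ne_zero ?_)
  have h := congrArg (rename (Equiv.swap 0 1)) (X_zero_sub_X_one_mul_demazure p)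
  simp only [map_mul, map_sub, rename_X, Equiv.swap_apply_left, Equiv.swap_apply_right,
    rename_swap_rename_swap] at h
  linear_combination -h - X_zero_sub_X_one_mul_demazure p

theorem isSymmetric_add_demazure_mul_X_one (p : MvPolynomial (Fin 2) A) :
    (p + demazure p * X 1).IsSymmetric := by
  refine isSymmetric_iff_rename_swap.mpr ?_
  rw [map_add, map_mul, isSymmetric_iff_rename_swap.mp (isSymmetric_demazure p), rename_X,
    Equiv.swap_apply_right]
  linear_combination X_zero_sub_X_one_mul_demazure p

noncomputable def demazureLinearMap :
    MvPolynomial (Fin 2) A →ₗ[symmetricSubalgebra (Fin 2) A] MvPolynomial (Fin 2) A where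
  toFun := demazure
  map_add' := demazure_add
  map_smul' s p := demazure_mul_of_isSymmetric ((mem_symmetricSubalgebra _).mp s.2) p

end MvPolynomial

namespace Subalgebra

variable {A R : Type*} [CommRing A] [CommRing R] [Algebra A R]

theorem tmul_mul_of_mem (S : Subalgebra A R) (a c : R) {s : R} (hs : s ∈ S) :
    a ⊗ₜ[S] (s * c) = (a * s) ⊗ₜ c := by
  rw [mul_comm a]
  exact (smul_tmul (⟨s, hs⟩ : S) a c).symm

end Subalgebra

namespace MvPolynomial

variable {A : Type*} [CommRing A]

local notation "R₂" => MvPolynomial (Fin 2) A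
local notation "S₂" => symmetricSubalgebra (Fin 2) A

noncomputable def yDiff : R₂ ⊗[S₂] R₂ := X 1 ⊗ₜ 1 - 1 ⊗ₜ X 1

theorem tmul_one_mul_yDiff (f : R₂) : (f ⊗ₜ[S₂] 1) * yDiff = (f * X 1) ⊗ₜ 1 - f ⊗ₜ X 1 := by
  rw [yDiff, mul_sub, Algebra.TensorProduct.tmul_mul_tmul, Algebra.TensorProduct.tmul_mul_tmul,
    mul_one, one_mul, mul_one]

theorem lmul'_tmul_one_mul_yDiff (f : R₂) :
    Algebra.TensorProduct.lmul' S₂ ((f ⊗ₜ[S₂] 1) * yDiff) = 0 := by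
  rw [tmul_one_mul_yDiff, map_sub, Algebra.TensorProduct.lmul'_apply_tmul,
    Algebra.TensorProduct.lmul'_apply_tmul, mul_one, sub_self]

/-- As `x + y` and `x y` pass through the tensor sign, `x ⊗ 1 - 1 ⊗ y = -(y ⊗ 1 - 1 ⊗ x)` and
`(y ⊗ 1 - 1 ⊗ x) * (y ⊗ 1 - 1 ⊗ y) = ((y - x) * (y - y)) ⊗ 1 = 0`. -/
theorem X_zero_tmul_one_mul_yDiff :
    (X 0 ⊗ₜ[S₂] 1) * yDiff = (1 ⊗ₜ X 1) * (yDiff : R₂ ⊗[S₂] R₂) := by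
  have tmul_one_of_symm : ∀ s : R₂, rename (Equiv.swap 0 1) s = s → s ⊗ₜ[S₂] 1 = 1 ⊗ₜ s :=
    fun s hs => by simpa using (Subalgebra.tmul_mul_of_mem S₂ 1 1
      ((mem_symmetricSubalgebra s).mpr (isSymmetric_iff_rename_swap.mpr hs))).symm
  have hsum := tmul_one_of_symm (X 0 + X 1) (by simp [add_comm])
  have hprod : (X 0 ⊗ₜ[S₂] 1) * (X 1 ⊗ₜ 1) = (1 ⊗ₜ X 0) * (1 ⊗ₜ X 1 : R₂ ⊗[S₂] R₂) := by
    simpa only [Algebra.TensorProduct.tmul_mul_tmul, mul_one, one_mul]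
      using tmul_one_of_symm (X 0 * X 1) (by simp [mul_comm])
  rw [add_tmul, tmul_add] at hsum
  rw [yDiff]
  linear_combination (-(1 ⊗ₜ X 1 : R₂ ⊗[S₂] R₂)) * hsum + hprod

variable [IsDomain A]

theorem tmul_eq_mul_tmul_one_add (a c : R₂) :
    a ⊗ₜ[S₂] c = (a * c) ⊗ₜ 1 + ((a * demazure c) ⊗ₜ 1) * yDiff := by
  have hc : c = (c + demazure c * X 1) * 1 - demazure c * X 1 := by ring
  have hsymm := (mem_symmetricSubalgebra _).mpr (isSymmetric_add_demazure_mul_X_one c)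
  have hdem := (mem_symmetricSubalgebra _).mpr (isSymmetric_demazure c)
  conv_lhs => rw [hc, tmul_sub, Subalgebra.tmul_mul_of_mem _ _ _ hsymm,
    Subalgebra.tmul_mul_of_mem _ _ _ hdem]
  rw [tmul_one_mul_yDiff, add_sub, ← add_tmul]
  congr 2; ring

noncomputable def demazureTensor : R₂ ⊗[S₂] R₂ →ₗ[S₂] R₂ :=
  lift ((LinearMap.mul S₂ R₂).compl₂ demazureLinearMap)

theorem demazureTensor_tmul (a c : R₂) : demazureTensor (a ⊗ₜ[S₂] c) = a * demazure c :=
  lift.tmul _ _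

theorem eq_lmul'_tmul_one_add (b : R₂ ⊗[S₂] R₂) :
    b = Algebra.TensorProduct.lmul' S₂ b ⊗ₜ 1 + (demazureTensor b ⊗ₜ 1) * yDiff := by
  induction b using TensorProduct.induction_on with
  | zero => simp
  | tmul a c =>
    rw [Algebra.TensorProduct.lmul'_apply_tmul, demazureTensor_tmul]
    exact tmul_eq_mul_tmul_one_add a c
  | add b₁ b₂ h₁ h₂ =>
    rw [map_add, map_add, add_tmul, add_tmul, add_mul]
    conv_lhs => rw [h₁, h₂]
    abel

theorem demazureTensor_tmul_one_mul_yDiff (f : R₂) :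
    demazureTensor ((f ⊗ₜ[S₂] 1) * yDiff) = f := by
  rw [tmul_one_mul_yDiff, map_sub, demazureTensor_tmul, demazureTensor_tmul, demazure_X_one,
    demazure_of_isSymmetric IsSymmetric.one]
  ring

end MvPolynomial

theorem stmt_11 (k : Type) [Field k]
    (br : stmt11B k →ₗ[k] stmt11R k)
    (hbr : ∀ f g : stmt11R k, br (f ⊗ₜ[↥(stmt11S k)] g) = f * g) :
    (∀ b : stmt11B k,
        br b = 0 ↔
          ∃ f : stmt11R k,
            b = (f ⊗ₜ[↥(stmt11S k)] (1 : stmt11R k))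
              * ((X 1 : stmt11R k) ⊗ₜ[↥(stmt11S k)] (1 : stmt11R k)
                  - (1 : stmt11R k) ⊗ₜ[↥(stmt11S k)] (X 1 : stmt11R k))) ∧
    (∀ f : stmt11R k,
        (f ⊗ₜ[↥(stmt11S k)] (1 : stmt11R k))
            * ((X 1 : stmt11R k) ⊗ₜ[↥(stmt11S k)] (1 : stmt11R k)
                - (1 : stmt11R k) ⊗ₜ[↥(stmt11S k)] (X 1 : stmt11R k)) = 0
          → f = 0) ∧
    ((X 0 : stmt11R k) ⊗ₜ[↥(stmt11S k)] (1 : stmt11R k))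
        * ((X 1 : stmt11R k) ⊗ₜ[↥(stmt11S k)] (1 : stmt11R k)
            - (1 : stmt11R k) ⊗ₜ[↥(stmt11S k)] (X 1 : stmt11R k))
      = ((1 : stmt11R k) ⊗ₜ[↥(stmt11S k)] (X 1 : stmt11R k))
        * ((X 1 : stmt11R k) ⊗ₜ[↥(stmt11S k)] (1 : stmt11R k)
            - (1 : stmt11R k) ⊗ₜ[↥(stmt11S k)] (X 1 : stmt11R k)) := by
  have hbr_eq : ∀ b, br b = Algebra.TensorProduct.lmul' (stmt11S k) b := fun b => by
    induction b using TensorProduct.induction_on with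
    | zero => simp
    | tmul f g => rw [hbr, Algebra.TensorProduct.lmul'_apply_tmul]
    | add b₁ b₂ h₁ h₂ => rw [map_add, map_add, h₁, h₂]
  refine ⟨fun b => ⟨fun hb => ⟨demazureTensor b, ?_⟩, ?_⟩, fun f hf => ?_,
    X_zero_tmul_one_mul_yDiff⟩
  · have h := eq_lmul'_tmul_one_add b
    rwa [← hbr_eq, hb, zero_tmul, zero_add] at h
  · rintro ⟨f, rfl⟩
    exact (hbr_eq _).trans (lmul'_tmul_one_mul_yDiff f)
  · rw [← demazureTensor_tmul_one_mul_yDiff f]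
    exact (congrArg demazureTensor hf).trans (map_zero _)
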